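/- For every integer d ≥ 1 and every M > 0 there exists a constant C = C(d, M) with the following property: for every integer n ≥ 1 and every function q : [0,∞) → ℝ which is (d+1)-times continuously differentiable with |q^{(i)}(t)| ≤ M for all t ≥ 0 and 0 ≤ i ≤ d+1, and which satisfies q(t) = 0 for all t ≥ 2, the trigonometric polynomial Q(θ) = q(0) + 2·∑_{k=1}^{2n} q(k/n)·cos(kθ) satisfies (1/2π)∫_0^{2π} |Q(θ)| dθ ≤ C. -/

import Mathlib

/-!
With `a k = q (k / n)`, summing by parts twice writes `Q` as `∑_{m < 2n} Δ²a m · K_m`, where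
`K_m = ∑_{k ≤ m} D_k` is `m + 1` times the Fejér kernel. Since `K_m = |∑_{j ≤ m} e^{ijθ}|² ≥ 0`
and `K_m` has mean `m + 1`, the mean of `|Q|` is at most `∑_{m < 2n} (m + 1) |Δ²a m|`. By the mean
value theorem applied twice, `|Δ²a m| ≤ M / n²`, so this is at most `2n · 2n · M / n² = 4M`.
-/

open Finset Real intervalIntegral
open scoped fwdDiff

lemma fwdDiff_iter_comp {M M' G : Type*} [AddCommMonoid M] [AddCommMonoid M'] [AddCommGroup G]
    {g : M → M'} {h : M} {h' : M'} (hg : ∀ y, g (y + h) = g y + h') (f : M' → G) (k : ℕ) :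
    (Δ_[h])^[k] (f ∘ g) = (Δ_[h'])^[k] f ∘ g := by
  induction k generalizing f with
  | zero => rfl
  | succ k ih =>
    have : Δ_[h] (f ∘ g) = Δ_[h'] f ∘ g := funext fun y => by simp [fwdDiff, hg]
    rw [Function.iterate_succ_apply, Function.iterate_succ_apply, this, ih]

lemma fwdDiff_iter_two_apply {M G : Type*} [AddCommMonoid M] [AddCommGroup G]
    (h : M) (f : M → G) (y : M) :
    (Δ_[h])^[2] f y = f (y + h + h) - 2 • f (y + h) + f y := by
  simp only [Function.iterate_succ, Function.iterate_zero, Function.id_comp, Function.comp_apply,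
    fwdDiff]
  abel

lemma abs_fwdDiff_iter_two_le {f : ℝ → ℝ} (hf : ContDiff ℝ 2 f) {K x h : ℝ} (hh : 0 ≤ h)
    (hK : ∀ t ∈ Set.Icc x (x + 2 * h), |iteratedDeriv 2 f t| ≤ K) :
    |(Δ_[h])^[2] f x| ≤ K * h ^ 2 := by
  have hf1 : Differentiable ℝ f := hf.differentiable (by norm_num)
  have hf2 : Differentiable ℝ (deriv f) :=
    (hf.iterate_deriv' 1 1).differentiable one_ne_zero
  have hderiv : ∀ y, HasDerivAt (Δ_[h] f) (deriv f (y + h) - deriv f y) y := fun y =>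
    ((hf1 (y + h)).hasDerivAt.comp_add_const y h).sub (hf1 y).hasDerivAt
  have hslope : ∀ y ∈ Set.Icc x (x + h), |deriv f (y + h) - deriv f y| ≤ K * h := by
    rintro y ⟨hxy, hyx⟩
    have := (convex_Icc x (x + 2 * h)).norm_image_sub_le_of_norm_deriv_le
      (fun t _ => hf2 t) (fun t ht => by simpa [iteratedDeriv_succ] using hK t ht)
      (x := y) (y := y + h) ⟨hxy, by linarith⟩ ⟨by linarith, by linarith⟩
    simpa [abs_of_nonneg hh] using this
  have := (convex_Icc x (x + h)).norm_image_sub_le_of_norm_deriv_le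
    (fun t _ => (hderiv t).differentiableAt)
    (fun t ht => by simpa [(hderiv t).deriv] using hslope t ht)
    (x := x) (y := x + h) ⟨le_rfl, by linarith⟩ ⟨by linarith, le_rfl⟩
  simpa [abs_of_nonneg hh, sq, mul_assoc, Function.iterate_succ, fwdDiff] using this

-- `m + 1` times the Fejér kernel of order `m`, i.e. the sum of the Dirichlet kernels `D_0, …, D_m`.
noncomputable def fejerKernel (m : ℕ) (θ : ℝ) : ℝ :=
  (m + 1) + 2 * ∑ l ∈ Icc 1 m, ((m : ℝ) + 1 - l) * cos (l * θ)

lemma fejerKernel_succ (m : ℕ) (θ : ℝ) :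
    fejerKernel (m + 1) θ = fejerKernel m θ + 1 + 2 * ∑ l ∈ Icc 1 (m + 1), cos (l * θ) := by
  have hsplit : ∑ l ∈ Icc 1 m, ((m : ℝ) + 1 + 1 - l) * cos (l * θ)
      = ∑ l ∈ Icc 1 m, ((m : ℝ) + 1 - l) * cos (l * θ) + ∑ l ∈ Icc 1 m, cos (l * θ) := by
    rw [← sum_add_distrib]
    exact sum_congr rfl fun l _ => by ring
  simp only [fejerKernel, sum_Icc_succ_top (Nat.le_add_left 1 m)]
  push_cast
  linear_combination 2 * hsplit

lemma sum_cos_mul_cos_add_sum_sin_mul_sin (m : ℕ) (θ : ℝ) :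
    (∑ j ∈ range (m + 1), cos (j * θ)) * cos ((m + 1) * θ)
      + (∑ j ∈ range (m + 1), sin (j * θ)) * sin ((m + 1) * θ)
      = ∑ l ∈ Icc 1 (m + 1), cos (l * θ) := by
  have hdiff : ∀ j ∈ range (m + 1),
      cos (j * θ) * cos ((m + 1) * θ) + sin (j * θ) * sin ((m + 1) * θ)
        = cos (((m - j : ℕ) + 1 : ℝ) * θ) := fun j hj => by
    rw [Nat.cast_sub (Nat.lt_succ_iff.mp (mem_range.mp hj)), mul_comm (cos _), mul_comm (sin _),
      ← cos_sub]
    ring_nf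
  have hreflect := sum_range_reflect (fun i : ℕ => cos (((i : ℝ) + 1) * θ)) (m + 1)
  simp only [Nat.add_sub_cancel] at hreflect
  rw [sum_mul, sum_mul, ← sum_add_distrib, sum_congr rfl hdiff, hreflect,
    ← Ico_add_one_right_eq_Icc, sum_Ico_eq_sum_range]
  refine sum_congr rfl fun i _ => ?_
  push_cast
  ring_nf

lemma fejerKernel_eq_sq_add_sq (m : ℕ) (θ : ℝ) :
    fejerKernel m θ = (∑ j ∈ range (m + 1), cos (j * θ)) ^ 2
      + (∑ j ∈ range (m + 1), sin (j * θ)) ^ 2 := by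
  induction m with
  | zero => simp [fejerKernel]
  | succ m ih =>
    rw [fejerKernel_succ, ih, sum_range_succ _ (m + 1), sum_range_succ _ (m + 1),
      ← sum_cos_mul_cos_add_sum_sin_mul_sin]
    push_cast
    linear_combination -sin_sq_add_cos_sq (((m : ℝ) + 1) * θ)

lemma fejerKernel_nonneg (m : ℕ) (θ : ℝ) : 0 ≤ fejerKernel m θ := by
  rw [fejerKernel_eq_sq_add_sq]; positivity

@[fun_prop]
lemma continuous_fejerKernel (m : ℕ) : Continuous (fejerKernel m) := by
  unfold fejerKernel; fun_prop

lemma integral_cos_nat_mul {l : ℕ} (hl : l ≠ 0) : ∫ θ in (0 : ℝ)..2 * π, cos (l * θ) = 0 := by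
  have : sin (l * (2 * π)) = 0 := by
    simpa [mul_comm, mul_assoc, mul_left_comm] using sin_nat_mul_pi (2 * l)
  simp [integral_comp_mul_left (fun x => cos x) (Nat.cast_ne_zero.mpr hl), this]

lemma integral_fejerKernel (m : ℕ) :
    ∫ θ in (0 : ℝ)..2 * π, fejerKernel m θ = 2 * π * (m + 1) := by
  have hint : ∀ l ∈ Icc 1 m, IntervalIntegrable (fun θ => ((m : ℝ) + 1 - l) * cos (l * θ))
      MeasureTheory.volume 0 (2 * π) := fun l _ => by
    apply Continuous.intervalIntegrable; fun_prop
  unfold fejerKernel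
  rw [integral_add intervalIntegrable_const (by apply Continuous.intervalIntegrable; fun_prop),
    integral_const_mul, integral_finsetSum hint, sum_eq_zero fun l hl => by
      rw [integral_const_mul, integral_cos_nat_mul (by grind), mul_zero]]
  simp only [integral_const, smul_eq_mul]
  ring

lemma sum_fwdDiff_two_mul_fejerKernel (a : ℕ → ℝ) (θ : ℝ) (N : ℕ) :
    ∑ m ∈ range N, (Δ_[1])^[2] a m * fejerKernel m θ
      = a 0 - (N + 1) * a N + N * a (N + 1)
        + 2 * ∑ l ∈ Icc 1 N,
            (a l - ((N : ℝ) + 1 - l) * a N + ((N : ℝ) - l) * a (N + 1)) * cos (l * θ) := by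
  induction N with
  | zero => simp
  | succ N ih =>
    have hsplit : ∑ l ∈ Icc 1 N,
          (a l - ((N : ℝ) + 1 + 1 - l) * a (N + 1) + ((N : ℝ) + 1 - l) * a (N + 1 + 1))
            * cos (l * θ)
        = ∑ l ∈ Icc 1 N,
            (a l - ((N : ℝ) + 1 - l) * a N + ((N : ℝ) - l) * a (N + 1)) * cos (l * θ)
          + (a (N + 1 + 1) - 2 * a (N + 1) + a N)
            * ∑ l ∈ Icc 1 N, ((N : ℝ) + 1 - l) * cos (l * θ) := by
      rw [mul_sum, ← sum_add_distrib]
      exact sum_congr rfl fun l _ => by ring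
    rw [sum_range_succ, ih, sum_Icc_succ_top (Nat.le_add_left 1 N), fejerKernel,
      fwdDiff_iter_two_apply]
    push_cast
    linear_combination (-2 : ℝ) * hsplit

lemma cosine_sum_eq_sum_fwdDiff_two_mul_fejerKernel {a : ℕ → ℝ} {N : ℕ} (hN : a N = 0)
    (hN1 : a (N + 1) = 0) (θ : ℝ) :
    a 0 + 2 * ∑ l ∈ Icc 1 N, a l * cos (l * θ)
      = ∑ m ∈ range N, (Δ_[1])^[2] a m * fejerKernel m θ := by
  rw [sum_fwdDiff_two_mul_fejerKernel, hN, hN1]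
  simp

lemma integral_abs_cosine_sum_le {a : ℕ → ℝ} {N : ℕ} (hN : a N = 0) (hN1 : a (N + 1) = 0) :
    ∫ θ in (0 : ℝ)..2 * π, |a 0 + 2 * ∑ l ∈ Icc 1 N, a l * cos (l * θ)|
      ≤ 2 * π * ∑ m ∈ range N, |(Δ_[1])^[2] a m| * (m + 1) := by
  simp_rw [cosine_sum_eq_sum_fwdDiff_two_mul_fejerKernel hN hN1]
  calc ∫ θ in (0 : ℝ)..2 * π, |∑ m ∈ range N, (Δ_[1])^[2] a m * fejerKernel m θ|
      ≤ ∫ θ in (0 : ℝ)..2 * π, ∑ m ∈ range N, |(Δ_[1])^[2] a m| * fejerKernel m θ := by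
        refine integral_mono_on (by positivity) (Continuous.intervalIntegrable (by fun_prop) _ _)
          (Continuous.intervalIntegrable (by fun_prop) _ _) fun θ _ => ?_
        refine (abs_sum_le_sum_abs _ _).trans_eq (sum_congr rfl fun m _ => ?_)
        rw [abs_mul, abs_of_nonneg (fejerKernel_nonneg m θ)]
    _ = 2 * π * ∑ m ∈ range N, |(Δ_[1])^[2] a m| * (m + 1) := by
        rw [integral_finsetSum fun m _ => Continuous.intervalIntegrable (by fun_prop) _ _, mul_sum]
        simp only [integral_const_mul, integral_fejerKernel]
        exact sum_congr rfl fun m _ => by ring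

theorem kernel_L1_bound (d : ℕ) (hd : 1 ≤ d) (M : ℝ) :
    ∃ C : ℝ, ∀ n : ℕ, 1 ≤ n → ∀ q : ℝ → ℝ,
      ContDiff ℝ (d + 1 : ℕ) q →
      (∀ t : ℝ, 0 ≤ t → ∀ i : ℕ, i ≤ d + 1 → |iteratedDeriv i q t| ≤ M) →
      (∀ t : ℝ, 2 ≤ t → q t = 0) →
      (1 / (2 * Real.pi)) * ∫ θ in (0 : ℝ)..(2 * Real.pi),
          |q 0 + 2 * ∑ k ∈ Finset.Icc 1 (2 * n), q ((k : ℝ) / (n : ℝ)) * Real.cos ((k : ℝ) * θ)|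
        ≤ C := by
  refine ⟨4 * M, fun n hn q hq hqM hq2 => ?_⟩
  have hn0 : (0 : ℝ) < n := by exact_mod_cast hn
  set a : ℕ → ℝ := q ∘ fun k => (k : ℝ) / n with ha
  have ha2n : a (2 * n) = 0 := hq2 _ (by field_simp; norm_num)
  have ha2n1 : a (2 * n + 1) = 0 := hq2 _ (by rw [le_div_iff₀ hn0]; push_cast; linarith)
  have hΔ : ∀ m : ℕ, |(Δ_[1])^[2] a m| ≤ M / n ^ 2 := fun m => by
    rw [ha, fwdDiff_iter_comp (g := fun k : ℕ => (k : ℝ) / n) (h' := 1 / n)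
      (fun k => by push_cast; ring), Function.comp_apply]
    calc _ ≤ M * (1 / n) ^ 2 :=
          abs_fwdDiff_iter_two_le (hq.of_le (by exact_mod_cast (by omega : 2 ≤ d + 1)))
            (by positivity) fun t ht =>
              hqM t ((by positivity : (0 : ℝ) ≤ m / n).trans ht.1) 2 (by omega)
      _ = M / n ^ 2 := by ring
  have hL1 := integral_abs_cosine_sum_le ha2n ha2n1
  simp only [ha, Function.comp_apply, Nat.cast_zero, zero_div] at hL1
  calc _ ≤ 1 / (2 * π) * (2 * π * ∑ m ∈ range (2 * n), |(Δ_[1])^[2] a m| * (m + 1)) := by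
        gcongr
    _ ≤ ∑ m ∈ range (2 * n), M / n ^ 2 * (2 * n) := by
        rw [← mul_assoc, one_div_mul_cancel (by positivity), one_mul]
        refine sum_le_sum fun m hm =>
          mul_le_mul (hΔ m) ?_ (by positivity) ((abs_nonneg _).trans (hΔ m))
        exact_mod_cast mem_range.mp hm
    _ = 4 * M := by
        rw [sum_const, card_range, nsmul_eq_mul]
        field_simp
        push_cast
        ring
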